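/- arXiv:1509.08456 — 5 statements merged into one kernel-verified Lean document; each statement's English description precedes it below -/
import Mathlib

section
/- For every q ∈ Δ_N there exist q̲, q̄ ∈ Δ_N such that every coordinate of q̲ and of q̄ is an extreme point of the corresponding simplex (i.e., for each i ∈ N, q̲_i and q̄_i each place the whole unit membership mass on a single subset containing i) and W(q̲) ≤ W(q) ≤ W(q̄). -/
/-!
With the other coordinates fixed, `W` is affine in `q_i`: each `q^A` sees `q_i` only through the
single coordinate `q_i^A`, in which the multilinear `f^w` is affine. So `W(q)` is the
`q_i`-weighted average of the values obtained by moving `q_i` to a vertex of `Δ_i`, and some vertex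
of positive weight does no better. Moving the coordinates to vertices one at a time gives `q̲`;
since `W` is linear in `w`, the same construction for `-w` gives `q̄`.
-/

open Finset

/-- Möbius inversion of a set function `w` on subsets of `N = Fin n`:
`μ^w(A) = ∑_{B ⊆ A} (−1)^{|A\B|} w(B)`. -/
def moebiusInv (n : ℕ) (w : Finset (Fin n) → ℝ) (A : Finset (Fin n)) : ℝ :=
  ∑ B ∈ A.powerset, (-1 : ℝ) ^ (A \ B).card * w B

/-- Multilinear extension of `w`: `f^w(x) = ∑_{B ⊆ N} (∏_{i ∈ B} x_i) μ^w(B)`. -/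
def mle (n : ℕ) (w : Finset (Fin n) → ℝ) (x : Fin n → ℝ) : ℝ :=
  ∑ B ∈ (univ : Finset (Fin n)).powerset, (∏ i ∈ B, x i) * moebiusInv n w B

/-- `q ∈ Δ_N`: `q i A` is the membership of data point `i` on subset `A`. -/
def IsMembership (n : ℕ) (q : Fin n → Finset (Fin n) → ℝ) : Prop :=
  (∀ i A, 0 ≤ q i A) ∧ (∀ i A, i ∉ A → q i A = 0) ∧
  (∀ i : Fin n, ∑ A ∈ univ.powerset.filter (fun A => i ∈ A), q i A = 1)

/-- Global score `W(q) = ∑_{∅ ≠ A ⊆ N} f^w(q^A)`. -/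
def score (n : ℕ) (w : Finset (Fin n) → ℝ) (q : Fin n → Finset (Fin n) → ℝ) : ℝ :=
  ∑ A ∈ univ.powerset.filter (fun A : Finset (Fin n) => A ≠ ∅),
    mle n w (fun i => q i A)

/-- `q_i` is an extreme point of `Δ_i`: the whole unit mass sits on a single
subset containing `i`. -/
def IsExtremeAt (n : ℕ) (q : Fin n → Finset (Fin n) → ℝ) (i : Fin n) : Prop :=
  ∃ A : Finset (Fin n), i ∈ A ∧ q i A = 1 ∧ ∀ B : Finset (Fin n), B ≠ A → q i B = 0

section Averaging

variable {ι : Type*} {s : Finset ι} {p f : ι → ℝ}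

lemma exists_pos_weight_le_sum_mul (hp : ∀ k ∈ s, 0 ≤ p k) (hp1 : ∑ k ∈ s, p k = 1) :
    ∃ k ∈ s, 0 < p k ∧ f k ≤ ∑ k ∈ s, p k * f k := by
  set a := ∑ k ∈ s, p k * f k
  set t := s.filter (fun k => 0 < p k)
  have hzero : ∀ k ∈ s, k ∉ t → p k = 0 := fun k hk hkt =>
    le_antisymm (not_lt.mp fun h => hkt (mem_filter.mpr ⟨hk, h⟩)) (hp k hk)
  have ht1 : ∑ k ∈ t, p k = 1 := by
    rw [← hp1]
    exact sum_subset (filter_subset _ _) hzero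
  have hta : ∑ k ∈ t, p k * f k = ∑ k ∈ t, p k * a := by
    rw [← sum_mul, ht1, one_mul]
    exact sum_subset (filter_subset _ _) fun k hk hkt => by rw [hzero k hk hkt, zero_mul]
  have htne : t.Nonempty := nonempty_of_sum_ne_zero (by rw [ht1]; exact one_ne_zero)
  obtain ⟨k, hkt, hk⟩ := exists_le_of_sum_le htne hta.le
  obtain ⟨hks, hpk⟩ := mem_filter.mp hkt
  exact ⟨k, hks, hpk, le_of_mul_le_mul_left hk hpk⟩

end Averaging

section MultilinearExtension

variable {n : ℕ} (w : Finset (Fin n) → ℝ)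

lemma mle_update (x : Fin n → ℝ) (i : Fin n) (t : ℝ) :
    mle n w (Function.update x i t) =
      (1 - t) * mle n w (Function.update x i 0) + t * mle n w (Function.update x i 1) := by
  have hprod : ∀ B : Finset (Fin n), ∏ j ∈ B, Function.update x i t j =
      (1 - t) * ∏ j ∈ B, Function.update x i 0 j + t * ∏ j ∈ B, Function.update x i 1 j := by
    intro B
    by_cases hi : i ∈ B
    · simp only [prod_update_of_mem hi]
      ring
    · simp only [prod_update_of_notMem hi]
      ring
  simp only [mle, hprod, mul_sum, ← sum_add_distrib]
  exact sum_congr rfl fun B _ => by ring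

lemma sum_mul_mle_update {ι : Type*} {s : Finset ι} {p t : ι → ℝ} (hp1 : ∑ k ∈ s, p k = 1)
    (x : Fin n → ℝ) (i : Fin n) :
    ∑ k ∈ s, p k * mle n w (Function.update x i (t k)) =
      mle n w (Function.update x i (∑ k ∈ s, p k * t k)) := by
  set m₀ := mle n w (Function.update x i 0)
  set m₁ := mle n w (Function.update x i 1)
  calc ∑ k ∈ s, p k * mle n w (Function.update x i (t k))
      = ∑ k ∈ s, (p k * m₀ + (p k * t k) * (m₁ - m₀)) :=
        sum_congr rfl fun k _ => by rw [mle_update]; ring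
    _ = (1 - ∑ k ∈ s, p k * t k) * m₀ + (∑ k ∈ s, p k * t k) * m₁ := by
        rw [sum_add_distrib, ← sum_mul, ← sum_mul, hp1]; ring
    _ = mle n w (Function.update x i (∑ k ∈ s, p k * t k)) := (mle_update w x i _).symm

lemma mle_neg (x : Fin n → ℝ) : mle n (-w) x = -mle n w x := by
  simp [mle, moebiusInv, sum_neg_distrib]

lemma score_neg (q : Fin n → Finset (Fin n) → ℝ) : score n (-w) q = -score n w q := by
  simp [score, mle_neg, sum_neg_distrib]

end MultilinearExtension

section Membership

variable {n : ℕ} {q : Fin n → Finset (Fin n) → ℝ}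

lemma IsMembership.sum_eq_one (hq : IsMembership n q) (i : Fin n) : ∑ A, q i A = 1 := by
  rw [← hq.2.2 i]
  exact (sum_subset (subset_univ _) fun A _ hA => hq.2.1 i A fun hiA => hA (by simp [hiA])).symm

lemma IsMembership.update_single (hq : IsMembership n q) {i : Fin n} {A : Finset (Fin n)}
    (hiA : i ∈ A) : IsMembership n (Function.update q i (Pi.single A 1)) := by
  refine ⟨fun j B => ?_, fun j B hjB => ?_, fun j => ?_⟩
  · rcases eq_or_ne j i with rfl | hji
    · simp only [Function.update_self, Pi.single_apply]
      split_ifs <;> norm_num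
    · simpa [Function.update_of_ne hji] using hq.1 j B
  · rcases eq_or_ne j i with rfl | hji
    · simp only [Function.update_self, Pi.single_apply]
      exact if_neg (by rintro rfl; exact hjB hiA)
    · simpa [Function.update_of_ne hji] using hq.2.1 j B hjB
  · rcases eq_or_ne j i with rfl | hji
    · simp [hiA]
    · simpa [Function.update_of_ne hji] using hq.2.2 j

lemma isExtremeAt_update_single (q : Fin n → Finset (Fin n) → ℝ) {i : Fin n}
    {A : Finset (Fin n)} (hiA : i ∈ A) : IsExtremeAt n (Function.update q i (Pi.single A 1)) i :=
  ⟨A, hiA, by simp, fun B hB => by simp [hB]⟩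

lemma IsExtremeAt.update_of_ne {i j : Fin n} (h : IsExtremeAt n q j) (hji : j ≠ i)
    (v : Finset (Fin n) → ℝ) : IsExtremeAt n (Function.update q i v) j := by
  simpa only [IsExtremeAt, Function.update_of_ne hji] using h

end Membership

section Score

variable {n : ℕ} (w : Finset (Fin n) → ℝ) {q : Fin n → Finset (Fin n) → ℝ}

lemma score_eq_sum_mul_score_update_single (hq : IsMembership n q) (i : Fin n) :
    score n w q = ∑ A', q i A' * score n w (Function.update q i (Pi.single A' 1)) := by
  simp only [score, mul_sum]
  rw [sum_comm]
  refine sum_congr rfl fun A _ => ?_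
  have hcoord : ∀ A' : Finset (Fin n), (fun j => Function.update q i (Pi.single A' 1) j A) =
      Function.update (fun j => q j A) i ((Pi.single A' 1 : Finset (Fin n) → ℝ) A) := fun A' =>
    funext (Function.apply_update (fun _ v => v A) q i _)
  have hmix : ∑ A', q i A' * (Pi.single A' 1 : Finset (Fin n) → ℝ) A = q i A := by
    simp [Pi.single_apply]
  simp only [hcoord]
  rw [sum_mul_mle_update w (hq.sum_eq_one i), hmix, Function.update_eq_self]

lemma exists_score_update_single_le (hq : IsMembership n q) (i : Fin n) :
    ∃ A, i ∈ A ∧ score n w (Function.update q i (Pi.single A 1)) ≤ score n w q := by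
  obtain ⟨A, -, hpos, hle⟩ := exists_pos_weight_le_sum_mul (fun A _ => hq.1 i A)
    (hq.sum_eq_one i) (f := fun A => score n w (Function.update q i (Pi.single A 1)))
  refine ⟨A, ?_, hle.trans (score_eq_sum_mul_score_update_single w hq i).ge⟩
  by_contra hiA
  exact hpos.ne' (hq.2.1 i A hiA)

lemma exists_extreme_score_le (hq : IsMembership n q) :
    ∃ q', IsMembership n q' ∧ (∀ i, IsExtremeAt n q' i) ∧ score n w q' ≤ score n w q := by
  suffices ∀ s : Finset (Fin n), ∃ q', IsMembership n q' ∧ (∀ i ∈ s, IsExtremeAt n q' i) ∧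
      score n w q' ≤ score n w q by
    obtain ⟨q', hq', hext, hle⟩ := this univ
    exact ⟨q', hq', fun i => hext i (mem_univ i), hle⟩
  intro s
  induction s using Finset.induction_on with
  | empty => exact ⟨q, hq, by simp, le_rfl⟩
  | insert i s his ih =>
    obtain ⟨q', hq', hext, hle⟩ := ih
    obtain ⟨A, hiA, hstep⟩ := exists_score_update_single_le w hq' i
    refine ⟨_, hq'.update_single hiA, fun j hj => ?_, hstep.trans hle⟩
    rcases mem_insert.mp hj with rfl | hjs
    · exact isExtremeAt_update_single q' hiA
    · exact (hext j hjs).update_of_ne (by rintro rfl; exact his hjs) _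

end Score

theorem extreme_bounds_general (n : ℕ) (w : Finset (Fin n) → ℝ)
    (q : Fin n → Finset (Fin n) → ℝ) (hq : IsMembership n q) :
    ∃ ql qu : Fin n → Finset (Fin n) → ℝ,
      IsMembership n ql ∧ IsMembership n qu ∧
      (∀ i : Fin n, IsExtremeAt n ql i) ∧ (∀ i : Fin n, IsExtremeAt n qu i) ∧
      score n w ql ≤ score n w q ∧ score n w q ≤ score n w qu := by
  obtain ⟨ql, hql, hextl, hlel⟩ := exists_extreme_score_le w hq
  obtain ⟨qu, hqu, hextu, hleu⟩ := exists_extreme_score_le (-w) hq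
  rw [score_neg, score_neg, neg_le_neg_iff] at hleu
  exact ⟨ql, qu, hql, hqu, hextl, hextu, hlel, hleu⟩

/-- for every `q ∈ Δ_N` there exist `q̲, q̄ ∈ Δ_N` whose coordinates
are all extreme points of the corresponding simplices and
`W(q̲) ≤ W(q) ≤ W(q̄)`. -/
theorem extreme_bounds (n : ℕ) (w : Finset (Fin n) → ℝ) (hw0 : w ∅ = 0)
    (q : Fin n → Finset (Fin n) → ℝ) (hq : IsMembership n q) :
    ∃ ql qu : Fin n → Finset (Fin n) → ℝ,
      IsMembership n ql ∧ IsMembership n qu ∧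
      (∀ i : Fin n, IsExtremeAt n ql i) ∧ (∀ i : Fin n, IsExtremeAt n qu i) ∧
      score n w ql ≤ score n w q ∧ score n w q ≤ score n w qu :=
  extreme_bounds_general n w q hq
end

section
/- Let q ∈ Δ_N be an extreme-point profile determined by an assignment i ↦ A_i with i ∈ A_i ⊆ N (i.e., q_i^{A_i} = 1 for each i). For each A ⊆ N let T_A = {i ∈ N : A_i = A}. Then W(q) = Σ_{A : T_A ≠ ∅} w(T_A), and the nonempty sets T_A form a partition of N; in particular, the value of W at any extreme-point profile equals Σ_{B∈P} w(B) for some partition P of N. -/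
/-! At the extreme profile, the slice `q^A` is the indicator vector of the fibre
`T_A = {i | A_i = A}`, and by Möbius inversion the multilinear extension agrees with `w` on
indicator vectors; hence `W(q) = ∑_{A ≠ ∅} w(T_A)`. Empty fibres contribute `w ∅ = 0`, and
`i ∈ A_i` rules out a nonempty fibre over `A = ∅`. Distinct nonempty fibres are disjoint and
cover `N`. -/

open Finset

/-- `P` is a partition of `N = Fin n`: a family of nonempty pairwise disjoint
subsets of `N` whose union is `N`. -/
def IsPartition (n : ℕ) (P : Finset (Finset (Fin n))) : Prop :=
  ∅ ∉ P ∧ (∀ A ∈ P, ∀ B ∈ P, A ≠ B → Disjoint A B) ∧ P.biUnion id = univ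

section MoebiusInversion

variable {α R : Type*} [DecidableEq α] [CommRing R]

theorem sum_Icc_neg_one_pow_card_sdiff {C S : Finset α} (hCS : C ⊆ S) :
    ∑ B ∈ Icc C S, (-1 : R) ^ #(B \ C) = if C = S then 1 else 0 := by
  have hinj : Set.InjOn (C ∪ ·) ((S \ C).powerset : Set (Finset α)) := fun D hD E hE hDE => by
    simp only [coe_powerset, Set.mem_preimage, Set.mem_powerset_iff, coe_subset,
      subset_sdiff] at hD hE
    simpa [union_sdiff_cancel_left hD.2.symm, union_sdiff_cancel_left hE.2.symm] using
      congrArg (· \ C) hDE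
  rw [Icc_eq_image_powerset hCS, sum_image hinj]
  have hcard : ∀ D ∈ (S \ C).powerset, (-1 : R) ^ #((C ∪ D) \ C) = (-1) ^ #D := fun D hD => by
    rw [union_sdiff_cancel_left (subset_sdiff.1 (mem_powerset.1 hD)).2.symm]
  have hsum := congrArg (Int.cast : ℤ → R) (sum_powerset_neg_one_pow_card (x := S \ C))
  push_cast at hsum
  rw [sum_congr rfl hcard, hsum]
  exact if_congr (sdiff_eq_empty_iff_subset.trans ⟨hCS.antisymm, fun h => h ▸ subset_rfl⟩) rfl rfl

theorem sum_powerset_sum_powerset_neg_one_pow_mul (f : Finset α → R) (S : Finset α) :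
    ∑ B ∈ S.powerset, ∑ C ∈ B.powerset, (-1 : R) ^ #(B \ C) * f C = f S := by
  rw [sum_comm' (t' := S.powerset) (s' := fun C => Icc C S) fun B C => by
    simp only [mem_powerset, mem_Icc]
    exact ⟨fun ⟨hBS, hCB⟩ => ⟨⟨hCB, hBS⟩, hCB.trans hBS⟩, fun ⟨⟨hCB, hBS⟩, _⟩ => ⟨hBS, hCB⟩⟩]
  calc ∑ C ∈ S.powerset, ∑ B ∈ Icc C S, (-1 : R) ^ #(B \ C) * f C
      = ∑ C ∈ S.powerset, (if C = S then 1 else 0) * f C := sum_congr rfl fun C hC => by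
        rw [← sum_mul, sum_Icc_neg_one_pow_card_sdiff (mem_powerset.1 hC)]
    _ = f S := by simp [ite_mul]

end MoebiusInversion

theorem mle_boole (n : ℕ) (w : Finset (Fin n) → ℝ) (p : Fin n → Prop) [DecidablePred p] :
    mle n w (fun i => if p i then 1 else 0) = w {i | p i} := by
  have hfilter : {B ∈ (univ : Finset (Fin n)).powerset | ∀ i ∈ B, p i} = powerset {i | p i} := by
    ext B; simp [subset_iff]
  rw [mle, ← sum_powerset_sum_powerset_neg_one_pow_mul w, ← hfilter, sum_filter]
  simp only [prod_boole, boole_mul, moebiusInv]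
  congr!

section Fibers

variable {n : ℕ} {β : Type*} [DecidableEq β]

theorem injOn_fiber (f : Fin n → β) :
    Set.InjOn (fun b => ({i | f i = b} : Finset (Fin n)))
      {b | ({i | f i = b} : Finset (Fin n)).Nonempty} :=
  fun b ⟨i, hi⟩ b' _ hbb' => by
    have hi' := (Finset.ext_iff.1 hbb' i).1 hi
    simp only [mem_filter, mem_univ, true_and] at hi hi'
    exact hi.symm.trans hi'

theorem isPartition_image_fiber (f : Fin n → β) {s : Finset β} (hs : ∀ i, f i ∈ s) :
    IsPartition n ({b ∈ s | ({i | f i = b} : Finset (Fin n)).Nonempty}.image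
      fun b => ({i | f i = b} : Finset (Fin n))) := by
  refine ⟨fun hmem => ?_, ?_, ?_⟩
  · obtain ⟨b, hb, hempty⟩ := mem_image.1 hmem
    exact (mem_filter.1 hb).2.ne_empty hempty
  · simp only [mem_image]
    rintro _ ⟨b, -, rfl⟩ _ ⟨b', -, rfl⟩ hne
    exact disjoint_filter.2 fun i _ hb hb' => hne (by rw [← hb, ← hb'])
  · refine eq_univ_of_forall fun i =>
      mem_biUnion.2 ⟨({j | f j = f i} : Finset (Fin n)), ?_, by simp⟩
    exact mem_image.2 ⟨f i, mem_filter.2 ⟨hs i, i, by simp⟩, rfl⟩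

end Fibers

theorem score_extreme_profile (n : ℕ) (w : Finset (Fin n) → ℝ) (hw0 : w ∅ = 0)
    (assign : Fin n → Finset (Fin n)) (hassign : ∀ i : Fin n, i ∈ assign i) :
    score n w (fun i A => if A = assign i then (1 : ℝ) else 0) =
      ∑ A ∈ univ.powerset.filter
          (fun A : Finset (Fin n) => (univ.filter fun i => assign i = A).Nonempty),
        w (univ.filter fun i => assign i = A) := by
  have hprofile : ∀ A, mle n w (fun i => if A = assign i then 1 else 0) = w {i | assign i = A} :=
    fun A => by simp only [mle_boole, eq_comm]
  rw [score, sum_congr rfl fun A _ => hprofile A]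
  refine (sum_subset (fun A hA => ?_) fun A hA hA' => ?_).symm
  · obtain ⟨hA, i, hi⟩ := mem_filter.1 hA
    exact mem_filter.2 ⟨hA, ne_empty_of_mem ((mem_filter.1 hi).2 ▸ hassign i)⟩
  · rw [not_nonempty_iff_eq_empty.1 fun h => hA' (mem_filter.2 ⟨(mem_filter.1 hA).1, h⟩), hw0]

/-- for the extreme-point profile `q` determined by an assignment
`i ↦ A_i` with `i ∈ A_i` (i.e. `q_i^{A_i} = 1`), letting
`T_A = {i : A_i = A}`, one has `W(q) = ∑_{A : T_A ≠ ∅} w(T_A)`; the nonempty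
`T_A` form a partition of `N`; and in particular `W(q) = ∑_{B ∈ P} w(B)` for
some partition `P` of `N`. -/
theorem extreme_profile_score (n : ℕ) (w : Finset (Fin n) → ℝ) (hw0 : w ∅ = 0)
    (assign : Fin n → Finset (Fin n)) (hassign : ∀ i : Fin n, i ∈ assign i) :
    score n w (fun i A => if A = assign i then (1 : ℝ) else 0) =
      (∑ A ∈ univ.powerset.filter
          (fun A : Finset (Fin n) => (univ.filter fun i => assign i = A).Nonempty),
        w (univ.filter fun i => assign i = A)) ∧
    IsPartition n ((univ.powerset.filter
        (fun A : Finset (Fin n) => (univ.filter fun i => assign i = A).Nonempty)).image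
      (fun A => univ.filter fun i => assign i = A)) ∧
    ∃ P : Finset (Finset (Fin n)), IsPartition n P ∧
      score n w (fun i A => if A = assign i then (1 : ℝ) else 0) = ∑ B ∈ P, w B := by
  have hscore := score_extreme_profile n w hw0 assign hassign
  have hpart := isPartition_image_fiber assign fun i => mem_powerset.2 (subset_univ (assign i))
  refine ⟨hscore, hpart, _, hpart, ?_⟩
  exact hscore.trans (sum_image ((injOn_fiber assign).mono fun A hA => (mem_filter.1 hA).2)).symm
end

section
/- Let i ∈ N and A ∈ 2^N_i with A\{i} ≠ ∅. If q ∈ Δ_N satisfies q_j^A = 1 for all j ∈ A\{i}, then w_{q_{−i}}(A) = w(A) − w(A\{i}); moreover w_{q_{−i}}({i}) = w({i}) regardless of q_{−i}. -/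
/-! Möbius inversion `∑_{B ⊆ A} μ^w(B) = w(A)` follows by induction on `A` from
`μ^w(B ∪ {a}) = μ^{Δ_a w}(B)` for `a ∉ B`, where `Δ_a w(C) = w(C ∪ {a}) − w(C)`.
Splitting the subsets of `A` according to whether they contain `i` then gives
`∑_{B ⊆ A\{i}} μ^w(B ∪ {i}) = w(A) − w(A\{i})`, which is `w_{q_{−i}}(A)` once every weight
`q_j^A` is `1`. For `A = {i}` there is no weight at all, and `w(∅) = 0` finishes. -/

open Finset

/-- `w_{q_{−i}}(A) = ∑_{B ⊆ A\{i}} (∏_{j∈B} q_j^A) μ^w(B ∪ {i})`. -/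
def wDer (n : ℕ) (w : Finset (Fin n) → ℝ) (q : Fin n → Finset (Fin n) → ℝ)
    (i : Fin n) (A : Finset (Fin n)) : ℝ :=
  ∑ B ∈ (A.erase i).powerset, (∏ j ∈ B, q j A) * moebiusInv n w (insert i B)

theorem moebiusInv_insert {n : ℕ} (w : Finset (Fin n) → ℝ) {a : Fin n} {B : Finset (Fin n)}
    (ha : a ∉ B) :
    moebiusInv n w (insert a B) = moebiusInv n (fun C => w (insert a C) - w C) B := by
  rw [moebiusInv, sum_powerset_insert ha, ← sum_add_distrib, moebiusInv]
  refine sum_congr rfl fun C hC => ?_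
  have haC : a ∉ C := fun h => ha (mem_powerset.1 hC h)
  rw [insert_sdiff_of_notMem _ haC, card_insert_of_notMem fun h => ha (mem_sdiff.1 h).1,
    insert_sdiff_insert, sdiff_insert_of_notMem ha, pow_succ]
  ring

theorem sum_powerset_moebiusInv {n : ℕ} (w : Finset (Fin n) → ℝ) (A : Finset (Fin n)) :
    ∑ B ∈ A.powerset, moebiusInv n w B = w A := by
  induction A using Finset.induction_on generalizing w with
  | empty => simp [moebiusInv]
  | insert a A ha ih =>
    have hΔ : ∑ B ∈ A.powerset, moebiusInv n w (insert a B) = w (insert a A) - w A := by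
      rw [← ih fun C => w (insert a C) - w C]
      exact sum_congr rfl fun B hB => moebiusInv_insert w fun h => ha (mem_powerset.1 hB h)
    rw [sum_powerset_insert ha, ih, hΔ]
    ring

theorem sum_powerset_moebiusInv_insert {n : ℕ} (w : Finset (Fin n) → ℝ) {i : Fin n}
    {S : Finset (Fin n)} (hi : i ∉ S) :
    ∑ B ∈ S.powerset, moebiusInv n w (insert i B) = w (insert i S) - w S := by
  rw [← sum_powerset_moebiusInv w (insert i S), sum_powerset_insert hi, sum_powerset_moebiusInv]
  ring

theorem wDer_eq_sub_of_full_members {n : ℕ} (w : Finset (Fin n) → ℝ)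
    (q : Fin n → Finset (Fin n) → ℝ) {i : Fin n} {A : Finset (Fin n)} (hiA : i ∈ A)
    (hfull : ∀ j ∈ A.erase i, q j A = 1) :
    wDer n w q i A = w A - w (A.erase i) := by
  have hprod : ∀ B ∈ (A.erase i).powerset, ∏ j ∈ B, q j A = 1 := fun B hB =>
    prod_eq_one fun j hj => hfull j (mem_powerset.1 hB hj)
  rw [wDer, sum_congr rfl fun B hB => by rw [hprod B hB, one_mul],
    sum_powerset_moebiusInv_insert w (notMem_erase i A), insert_erase hiA]

theorem wDer_of_full_members_general (n : ℕ) (w : Finset (Fin n) → ℝ) (hw0 : w ∅ = 0)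
    (i : Fin n) (A : Finset (Fin n)) (hiA : i ∈ A)
    (q : Fin n → Finset (Fin n) → ℝ)
    (hfull : ∀ j ∈ A.erase i, q j A = 1) :
    wDer n w q i A = w A - w (A.erase i) ∧
    ∀ q' : Fin n → Finset (Fin n) → ℝ, IsMembership n q' →
      wDer n w q' i {i} = w {i} := by
  refine ⟨wDer_eq_sub_of_full_members w q hiA hfull, fun q' _ => ?_⟩
  simpa [hw0] using wDer_eq_sub_of_full_members w q' (mem_singleton_self i) (by simp)

/-- if `i ∈ A`, `A\{i} ≠ ∅` and `q_j^A = 1` for all `j ∈ A\{i}`,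
then `w_{q_{−i}}(A) = w(A) − w(A\{i})`; moreover `w_{q_{−i}}({i}) = w({i})`
regardless of `q_{−i}`. -/
theorem wDer_of_full_members (n : ℕ) (w : Finset (Fin n) → ℝ) (hw0 : w ∅ = 0)
    (i : Fin n) (A : Finset (Fin n)) (hiA : i ∈ A) (hne : (A.erase i).Nonempty)
    (q : Fin n → Finset (Fin n) → ℝ) (hq : IsMembership n q)
    (hfull : ∀ j ∈ A.erase i, q j A = 1) :
    wDer n w q i A = w A - w (A.erase i) ∧
    ∀ q' : Fin n → Finset (Fin n) → ℝ, IsMembership n q' →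
      wDer n w q' i {i} = w {i} :=
  wDer_of_full_members_general n w hw0 i A hiA q hfull
end

section
/- Let P be a partition of N, p ∈ Δ_N the associated hard clustering (p_i^A = 1 for all A ∈ P, i ∈ A), and let i ∈ N lie in a block A ∈ P with |A| > 1. Then for every unilateral deviation q_i ∈ Δ_i of data point i, W(p) − W(q_i | p_{−i}) = (1 − q_i^A) · Σ_{B ⊆ A, i ∈ B, |B| > 1} μ^w(B). -/
/-!
The multilinear extension is affine in each coordinate, with slope the partial derivative
`∂_i f^w`, which does not involve `x_i`. Hence moving only data point `i` changes the term of `W`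
at `C` by `(p_i^C − q_i^C) · ∂_i f^w(p^C)`. For the hard clustering, `p^C` vanishes off `i` unless
`C = A`, so `∂_i f^w(p^C)` is `μ^w({i})`, plus `∑_{B ⊆ A, i ∈ B, |B| > 1} μ^w(B)` when `C = A`.
The common part `μ^w({i})` contributes nothing, because `p_i` and `q_i` both have total mass one.
-/
open Finset

/-- The hard clustering associated with a partition `P`: `p_i^A = 1` for all
`A ∈ P` and `i ∈ A`. -/
def hardClustering (n : ℕ) (P : Finset (Finset (Fin n))) :
    Fin n → Finset (Fin n) → ℝ :=
  fun i A => if A ∈ P ∧ i ∈ A then 1 else 0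

theorem sum_powerset_filter_mem_eq_singleton_add {α M : Type*} [DecidableEq α] [AddCommMonoid M]
    (f : Finset α → M) {i : α} {A : Finset α} (hiA : i ∈ A) :
    ∑ B ∈ A.powerset with i ∈ B, f B =
      f {i} + ∑ B ∈ A.powerset with i ∈ B ∧ 1 < B.card, f B := by
  have hsingleton : {B ∈ A.powerset | i ∈ B ∧ ¬1 < B.card} = {{i}} := by
    ext B
    simp only [mem_filter, mem_powerset, not_lt, card_le_one, mem_singleton]
    constructor
    · rintro ⟨-, hiB, hB⟩
      exact eq_singleton_iff_unique_mem.2 ⟨hiB, fun j hj => hB j hj i hiB⟩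
    · rintro rfl
      simp [hiA]
  rw [← sum_filter_add_sum_filter_not _ (fun B => 1 < B.card), filter_filter, filter_filter,
    hsingleton, sum_singleton, add_comm]

section MultilinearExtension

variable {n : ℕ} (w : Finset (Fin n) → ℝ) (i : Fin n)

-- The partial derivative `∂f^w/∂x_i`.
def mlePartial (x : Fin n → ℝ) : ℝ :=
  ∑ B ∈ univ.powerset with i ∈ B, (∏ j ∈ B \ {i}, x j) * moebiusInv n w B

theorem mle_update_sub_mle_update (x : Fin n → ℝ) (s t : ℝ) :
    mle n w (Function.update x i s) - mle n w (Function.update x i t) =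
      (s - t) * mlePartial w i x := by
  simp only [mle, mlePartial, ← sum_sub_distrib, sum_filter, mul_sum]
  refine sum_congr rfl fun B _ => ?_
  by_cases hiB : i ∈ B
  · rw [prod_update_of_mem hiB, prod_update_of_mem hiB, if_pos hiB]
    ring
  · rw [prod_update_of_notMem hiB, prod_update_of_notMem hiB, if_neg hiB, sub_self, mul_zero]

theorem mlePartial_indicator (C : Finset (Fin n)) :
    mlePartial w i (fun j => if j ∈ C then 1 else 0) =
      ∑ B ∈ (insert i C).powerset with i ∈ B, moebiusInv n w B := by
  simp only [mlePartial, prod_boole, ite_mul, one_mul, zero_mul, ← sum_filter, filter_filter]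
  refine sum_congr (ext fun B => ?_) fun _ _ => rfl
  simp only [mem_filter, mem_powerset, subset_univ, true_and, mem_sdiff, mem_singleton]
  constructor
  · rintro ⟨hiB, hB⟩
    exact ⟨fun j hj => mem_insert.2 ((em (j = i)).imp_right fun hji => hB j ⟨hj, hji⟩), hiB⟩
  · rintro ⟨hB, hiB⟩
    exact ⟨hiB, fun j ⟨hj, hji⟩ => (mem_insert.1 (hB hj)).resolve_left hji⟩

theorem score_sub_score_deviation (p : Fin n → Finset (Fin n) → ℝ) (qi : Finset (Fin n) → ℝ)
    (hp : ∀ C, i ∉ C → p i C = 0) (hqi : ∀ C, i ∉ C → qi C = 0) :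
    score n w p - score n w (fun j C => if j = i then qi C else p j C) =
      ∑ C ∈ univ.powerset with i ∈ C, (p i C - qi C) * mlePartial w i (fun j => p j C) := by
  have hterm : ∀ C, mle n w (fun j => p j C) - mle n w (fun j => if j = i then qi C else p j C) =
      (p i C - qi C) * mlePartial w i (fun j => p j C) := fun C => by
    rw [← mle_update_sub_mle_update, Function.update_eq_self]
    congr 2
    funext j
    rw [Function.update_apply]
  rw [score, score, ← sum_sub_distrib]
  simp only [hterm]
  refine (sum_subset (fun C => ?_) fun C _ hC => ?_).symm
  · simp only [mem_filter]
    exact fun h => ⟨h.1, ne_empty_of_mem h.2⟩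
  · have hiC : i ∉ C := fun h => hC (mem_filter.2 ⟨mem_powerset.2 (subset_univ C), h⟩)
    rw [hp C hiC, hqi C hiC, sub_self, zero_mul]

end MultilinearExtension

section HardClustering

variable {n : ℕ} (w : Finset (Fin n) → ℝ) (i : Fin n) {P : Finset (Finset (Fin n))}
  {A : Finset (Fin n)}

theorem hardClustering_apply_of_mem (hdisj : ∀ A ∈ P, ∀ B ∈ P, A ≠ B → Disjoint A B)
    (hAP : A ∈ P) (hiA : i ∈ A) (C : Finset (Fin n)) :
    hardClustering n P i C = if C = A then 1 else 0 := by
  by_cases hCA : C = A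
  · simp [hardClustering, hCA, hAP, hiA]
  · have : ¬(C ∈ P ∧ i ∈ C) := fun ⟨hCP, hiC⟩ =>
      disjoint_left.1 (hdisj C hCP A hAP hCA) hiC hiA
    simp [hardClustering, hCA, this]

theorem mlePartial_hardClustering (hdisj : ∀ A ∈ P, ∀ B ∈ P, A ≠ B → Disjoint A B)
    (hAP : A ∈ P) (hiA : i ∈ A) {C : Finset (Fin n)} (hiC : i ∈ C) :
    mlePartial w i (fun j => hardClustering n P j C) =
      moebiusInv n w {i} +
        if C = A then ∑ B ∈ A.powerset with i ∈ B ∧ 1 < B.card, moebiusInv n w B else 0 := by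
  by_cases hCA : C = A
  · subst hCA
    have hcol : (fun j => hardClustering n P j C) = fun j => if j ∈ C then 1 else 0 := by
      simp [hardClustering, hAP]
    rw [hcol, mlePartial_indicator, insert_eq_of_mem hiA,
      sum_powerset_filter_mem_eq_singleton_add _ hiA, if_pos rfl]
  · have hCP : C ∉ P := fun hCP => disjoint_left.1 (hdisj C hCP A hAP hCA) hiC hiA
    have hcol : (fun j => hardClustering n P j C) =
        fun j => if j ∈ (∅ : Finset (Fin n)) then 1 else 0 := by
      simp [hardClustering, hCP]
    rw [hcol, mlePartial_indicator, if_neg hCA, add_zero, powerset_insert, powerset_empty]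
    simp [filter_insert, filter_singleton]

end HardClustering

theorem deviation_from_hard_clustering_general (n : ℕ) (w : Finset (Fin n) → ℝ)
    (P : Finset (Finset (Fin n))) (hP : IsPartition n P)
    (A : Finset (Fin n)) (hAP : A ∈ P) (i : Fin n) (hiA : i ∈ A)
    (qi : Finset (Fin n) → ℝ)
    (hqiz : ∀ B : Finset (Fin n), i ∉ B → qi B = 0)
    (hqi1 : ∑ B ∈ univ.powerset.filter (fun B => i ∈ B), qi B = 1) :
    score n w (hardClustering n P) -
        score n w (fun j B => if j = i then qi B else hardClustering n P j B) =
      (1 - qi A) *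
        ∑ B ∈ A.powerset.filter (fun B => i ∈ B ∧ 1 < B.card), moebiusInv n w B := by
  obtain ⟨-, hdisj, -⟩ := hP
  set S := univ.powerset.filter (fun B => i ∈ B)
  set T := ∑ B ∈ A.powerset.filter (fun B => i ∈ B ∧ 1 < B.card), moebiusInv n w B
  have hAS : A ∈ S := by simp [S, hiA]
  have hmass : ∑ C ∈ S, ((if C = A then 1 else 0) - qi C) = 0 := by
    rw [sum_sub_distrib, sum_ite_eq', if_pos hAS, hqi1, sub_self]
  rw [score_sub_score_deviation w i _ qi (fun C hiC => by simp [hardClustering, hiC]) hqiz]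
  calc _ = ∑ C ∈ S, (((if C = A then 1 else 0) - qi C) * moebiusInv n w {i} +
          if C = A then (1 - qi A) * T else 0) := by
        refine sum_congr rfl fun C hC => ?_
        rw [hardClustering_apply_of_mem i hdisj hAP hiA,
          mlePartial_hardClustering w i hdisj hAP hiA (mem_filter.1 hC).2]
        split_ifs with hCA
        · rw [hCA]; ring
        · ring
    _ = (1 - qi A) * T := by
      rw [sum_add_distrib, ← sum_mul, hmass, zero_mul, zero_add, sum_ite_eq', if_pos hAS]

/-- let `p` be the hard clustering of a partition `P`, and let
`i ∈ A ∈ P` with `|A| > 1`. For every unilateral deviation `q_i ∈ Δ_i` of `i`,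
`W(p) − W(q_i | p_{−i}) = (1 − q_i^A) · ∑_{B ⊆ A, i ∈ B, |B| > 1} μ^w(B)`. -/
theorem deviation_from_hard_clustering (n : ℕ) (w : Finset (Fin n) → ℝ)
    (hw0 : w ∅ = 0)
    (P : Finset (Finset (Fin n))) (hP : IsPartition n P)
    (A : Finset (Fin n)) (hAP : A ∈ P) (i : Fin n) (hiA : i ∈ A)
    (hcard : 1 < A.card)
    (qi : Finset (Fin n) → ℝ)
    (hqi0 : ∀ B : Finset (Fin n), 0 ≤ qi B)
    (hqiz : ∀ B : Finset (Fin n), i ∉ B → qi B = 0)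
    (hqi1 : ∑ B ∈ univ.powerset.filter (fun B => i ∈ B), qi B = 1) :
    score n w (hardClustering n P) -
        score n w (fun j B => if j = i then qi B else hardClustering n P j B) =
      (1 - qi A) *
        ∑ B ∈ A.powerset.filter (fun B => i ∈ B ∧ 1 < B.card), moebiusInv n w B :=
  deviation_from_hard_clustering_general n w P hP A hAP i hiA qi hqiz hqi1
end

section
/- Let h be the partition function additively separated by a set function v (h(P) = Σ_{A∈P} v(A) for all partitions P of N). Then the Möbius inversion of h over the partition lattice of N, μ^h(P) = Σ_{Q ≤ P} μ_{𝒫^N}(Q,P) h(Q), vanishes at every partition P that is not modular, i.e., at every P having at least two blocks of cardinality greater than 1. -/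
/-!
Invert `v` on the Boolean lattice: `v A = ∑_{B ⊆ A} w B`, with `w ∅ = v ∅ = 0`. A nonempty `B`
lies in at most one block of a partition `Q`, and it lies in one exactly when `M_B ≤ Q`, where
`M_B` is the modular partition whose only possibly non-singleton block is `B`. Hence
`h(Q) = ∑_{B ≠ ∅} w B · [M_B ≤ Q]`, and `μ^h(P) = ∑_{B ≠ ∅} w B · ∑_{M_B ≤ Q ≤ P} μ(Q, P)`.
The defining recursion of `μ` kills each inner sum unless `M_B = P`, which a non-modular `P`
rules out.
-/

open Finset

open scoped Classical

/-- Refinement order on partitions: `Q ≤ P` iff every block of `Q` is contained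
in a block of `P`. -/
def Refines (n : ℕ) (Q P : Finset (Finset (Fin n))) : Prop :=
  ∀ B ∈ Q, ∃ A ∈ P, B ⊆ A

theorem exists_sum_Iic_eq {α 𝕜 : Type*} [Ring 𝕜] [PartialOrder α] [LocallyFiniteOrder α]
    [LocallyFiniteOrderBot α] [DecidableEq α] (g : α → 𝕜) :
    ∃ f : α → 𝕜, ∀ x, ∑ y ∈ Iic x, f y = g x := by
  refine ⟨fun y => ∑ z ∈ Iic y, IncidenceAlgebra.mu 𝕜 z y * g z, fun x => ?_⟩
  rw [sum_comm' (t' := Iic x) (s' := fun z => Icc z x)]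
  · simp_rw [← sum_mul, IncidenceAlgebra.sum_Icc_mu_right, ite_mul, one_mul, zero_mul]
    simp
  · intro y z
    simp only [mem_Iic, mem_Icc]
    exact ⟨fun ⟨hyx, hzy⟩ => ⟨⟨hzy, hyx⟩, hzy.trans hyx⟩, fun ⟨⟨hzy, hyx⟩, _⟩ => ⟨hyx, hzy⟩⟩

theorem exists_sum_powerset_eq {α 𝕜 : Type*} [Ring 𝕜] [DecidableEq α] (v : Finset α → 𝕜) :
    ∃ w : Finset α → 𝕜, ∀ A, ∑ B ∈ A.powerset, w B = v A := by
  simpa only [Iic_eq_powerset] using exists_sum_Iic_eq v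

variable {n : ℕ}

theorem Refines.trans {Q R S : Finset (Finset (Fin n))} (hQR : Refines n Q R)
    (hRS : Refines n R S) : Refines n Q S := fun B hB =>
  let ⟨A, hA, hBA⟩ := hQR B hB
  let ⟨C, hC, hAC⟩ := hRS A hA
  ⟨C, hC, hBA.trans hAC⟩

namespace IsPartition

variable {Q : Finset (Finset (Fin n))}

theorem exists_mem (hQ : IsPartition n Q) (x : Fin n) : ∃ A ∈ Q, x ∈ A := by
  simpa using (hQ.2.2.symm ▸ mem_univ x : x ∈ Q.biUnion id)

theorem eq_of_mem_of_mem (hQ : IsPartition n Q) {A B : Finset (Fin n)} (hA : A ∈ Q)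
    (hB : B ∈ Q) {x : Fin n} (hxA : x ∈ A) (hxB : x ∈ B) : A = B := by
  by_contra hAB
  exact disjoint_left.1 (hQ.2.1 A hA B hB hAB) hxA hxB

theorem sum_ite_subset_eq_ite_exists {M : Type*} [AddCommMonoid M] (hQ : IsPartition n Q)
    {B : Finset (Fin n)} (hB : B.Nonempty) (c : M) :
    ∑ A ∈ Q, (if B ⊆ A then c else 0) = if ∃ A ∈ Q, B ⊆ A then c else 0 := by
  split_ifs with hex
  · obtain ⟨A₀, hA₀, hBA₀⟩ := hex
    obtain ⟨x, hx⟩ := hB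
    rw [sum_eq_single_of_mem A₀ hA₀ fun A hA hne => if_neg fun hBA =>
      hne (hQ.eq_of_mem_of_mem hA hA₀ (hBA hx) (hBA₀ hx)), if_pos hBA₀]
  · exact sum_eq_zero fun A hA => if_neg fun hBA => hex ⟨A, hA, hBA⟩

theorem sum_sum_powerset_eq_sum_ite_exists_subset {M : Type*} [AddCommMonoid M]
    (hQ : IsPartition n Q) (w : Finset (Fin n) → M) (hw : w ∅ = 0) :
    ∑ A ∈ Q, ∑ B ∈ A.powerset, w B =
      ∑ B ∈ univ.filter Finset.Nonempty, if ∃ A ∈ Q, B ⊆ A then w B else 0 := by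
  have hpowerset : ∀ A : Finset (Fin n), ∑ B ∈ A.powerset, w B =
      ∑ B ∈ univ.filter Finset.Nonempty, if B ⊆ A then w B else 0 := by
    intro A
    rw [← sum_filter, filter_filter, ← sum_filter_add_sum_filter_not A.powerset Finset.Nonempty]
    have hempty : ∑ B ∈ A.powerset.filter (¬·.Nonempty), w B = 0 :=
      sum_eq_zero fun B hB => by
        rw [not_nonempty_iff_eq_empty.1 (mem_filter.1 hB).2, hw]
    rw [hempty, add_zero]
    exact sum_congr (by ext; simp [and_comm]) fun _ _ => rfl
  simp_rw [hpowerset]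
  rw [sum_comm]
  exact sum_congr rfl fun B hB => hQ.sum_ite_subset_eq_ite_exists (mem_filter.1 hB).2 (w B)

end IsPartition

def modularPartition (n : ℕ) (B : Finset (Fin n)) : Finset (Finset (Fin n)) :=
  insert B ((univ \ B).image singleton)

section ModularPartition

variable {B : Finset (Fin n)}

theorem mem_modularPartition {C : Finset (Fin n)} :
    C ∈ modularPartition n B ↔ C = B ∨ ∃ x ∉ B, C = {x} := by
  simp [modularPartition, eq_comm]

theorem isPartition_modularPartition (hB : B.Nonempty) :
    IsPartition n (modularPartition n B) := by
  refine ⟨fun h => ?_, fun C hC D hD hCD => ?_, ?_⟩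
  · rcases mem_modularPartition.1 h with h | ⟨x, -, h⟩
    · exact hB.ne_empty h.symm
    · exact singleton_ne_empty x h.symm
  · rcases mem_modularPartition.1 hC with rfl | ⟨x, hx, rfl⟩ <;>
      rcases mem_modularPartition.1 hD with rfl | ⟨y, hy, rfl⟩
    · exact absurd rfl hCD
    · exact disjoint_singleton_right.2 hy
    · exact disjoint_singleton_left.2 hx
    · exact disjoint_singleton.2 fun hxy => hCD (hxy ▸ rfl)
  · refine eq_univ_of_forall fun x => mem_biUnion.2 ?_
    by_cases hx : x ∈ B
    · exact ⟨B, mem_modularPartition.2 (Or.inl rfl), hx⟩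
    · exact ⟨{x}, mem_modularPartition.2 (Or.inr ⟨x, hx, rfl⟩), mem_singleton_self x⟩

theorem card_filter_one_lt_card_modularPartition_le_one :
    ((modularPartition n B).filter fun A => 1 < A.card).card ≤ 1 := by
  refine card_le_one_iff_subset_singleton.2 ⟨B, fun C hC => ?_⟩
  obtain ⟨hC, hcard⟩ := mem_filter.1 hC
  rcases mem_modularPartition.1 hC with rfl | ⟨x, -, rfl⟩
  · exact mem_singleton_self C
  · simp at hcard

theorem refines_modularPartition_iff {Q : Finset (Finset (Fin n))} (hQ : IsPartition n Q) :
    Refines n (modularPartition n B) Q ↔ ∃ A ∈ Q, B ⊆ A := by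
  refine ⟨fun h => h B (mem_modularPartition.2 (Or.inl rfl)), fun ⟨A, hA, hBA⟩ C hC => ?_⟩
  rcases mem_modularPartition.1 hC with rfl | ⟨x, -, rfl⟩
  · exact ⟨A, hA, hBA⟩
  · obtain ⟨D, hD, hxD⟩ := hQ.exists_mem x
    exact ⟨D, hD, singleton_subset_iff.2 hxD⟩

end ModularPartition

theorem sum_moebius_ite_refines_eq_zero {M : Type*} [AddCommMonoid M]
    (mu : Finset (Finset (Fin n)) → Finset (Finset (Fin n)) → M)
    (hrec : ∀ Q P : Finset (Finset (Fin n)),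
      IsPartition n Q → IsPartition n P → Refines n Q P → Q ≠ P →
      ∑ R ∈ univ.filter
          (fun R : Finset (Finset (Fin n)) =>
            IsPartition n R ∧ Refines n Q R ∧ Refines n R P),
        mu R P = 0)
    {L P : Finset (Finset (Fin n))} (hL : IsPartition n L) (hP : IsPartition n P)
    (hLP : L ≠ P) :
    ∑ Q ∈ univ.filter (fun Q => IsPartition n Q ∧ Refines n Q P),
      (if Refines n L Q then mu Q P else 0) = 0 := by
  rw [← sum_filter, filter_filter]
  by_cases hle : Refines n L P
  · rw [← hrec L P hL hP hle hLP]
    exact sum_congr (by ext; simp only [mem_filter]; tauto) fun _ _ => rfl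
  · refine sum_eq_zero fun Q hQ => absurd ?_ hle
    obtain ⟨-, ⟨-, hQP⟩, hLQ⟩ := mem_filter.1 hQ
    exact hLQ.trans hQP

theorem moebius_of_separable_vanishes_off_modular_general (n : ℕ)
    (v : Finset (Fin n) → ℝ) (hv : v ∅ = 0)
    (h : Finset (Finset (Fin n)) → ℝ)
    (hsep : ∀ P : Finset (Finset (Fin n)), IsPartition n P → h P = ∑ A ∈ P, v A)
    (mu : Finset (Finset (Fin n)) → Finset (Finset (Fin n)) → ℝ)
    (hrec : ∀ Q P : Finset (Finset (Fin n)),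
      IsPartition n Q → IsPartition n P → Refines n Q P → Q ≠ P →
      ∑ R ∈ univ.filter
          (fun R : Finset (Finset (Fin n)) =>
            IsPartition n R ∧ Refines n Q R ∧ Refines n R P),
        mu R P = 0)
    (P : Finset (Finset (Fin n))) (hP : IsPartition n P)
    (hnonmod : 1 < (P.filter fun A => 1 < A.card).card) :
    ∑ Q ∈ univ.filter
        (fun Q : Finset (Finset (Fin n)) => IsPartition n Q ∧ Refines n Q P),
      mu Q P * h Q = 0 := by
  obtain ⟨w, hw⟩ := exists_sum_powerset_eq v
  have hw₀ : w ∅ = 0 := by simpa [hv] using hw ∅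
  have hzeta : ∀ Q, IsPartition n Q → h Q = ∑ B ∈ univ.filter Finset.Nonempty,
      if Refines n (modularPartition n B) Q then w B else 0 := by
    intro Q hQ
    simp_rw [hsep Q hQ, ← hw, hQ.sum_sum_powerset_eq_sum_ite_exists_subset w hw₀,
      refines_modularPartition_iff hQ]
  calc ∑ Q ∈ univ.filter (fun Q => IsPartition n Q ∧ Refines n Q P), mu Q P * h Q
      = ∑ B ∈ univ.filter Finset.Nonempty,
          (∑ Q ∈ univ.filter (fun Q => IsPartition n Q ∧ Refines n Q P),
            if Refines n (modularPartition n B) Q then mu Q P else 0) * w B := by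
        rw [sum_congr rfl fun Q hQ => by rw [hzeta Q (mem_filter.1 hQ).2.1, mul_sum], sum_comm]
        simp_rw [sum_mul, mul_ite, ite_mul, mul_zero, zero_mul]
    _ = 0 := sum_eq_zero fun B hB => by
        have hMP : modularPartition n B ≠ P := fun hMP =>
          (hMP ▸ card_filter_one_lt_card_modularPartition_le_one).not_gt hnonmod
        rw [sum_moebius_ite_refines_eq_zero mu hrec
          (isPartition_modularPartition (mem_filter.1 hB).2) hP hMP, zero_mul]

/-- let `h` be the partition function additively separated by a set
function `v` and let `mu` be the Möbius function of the partition lattice of `N`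
(characterized by `mu P P = 1` and `∑_{Q ≤ R ≤ P} mu R P = 0` for `Q < P`).
Then the Möbius inversion `μ^h(P) = ∑_{Q ≤ P} mu Q P · h(Q)` vanishes at every
non-modular partition `P`, i.e. at every `P` with at least two blocks of
cardinality greater than `1`. -/
theorem moebius_of_separable_vanishes_off_modular (n : ℕ)
    (v : Finset (Fin n) → ℝ) (hv : v ∅ = 0)
    (h : Finset (Finset (Fin n)) → ℝ)
    (hsep : ∀ P : Finset (Finset (Fin n)), IsPartition n P → h P = ∑ A ∈ P, v A)
    (mu : Finset (Finset (Fin n)) → Finset (Finset (Fin n)) → ℝ)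
    (hdiag : ∀ P : Finset (Finset (Fin n)), IsPartition n P → mu P P = 1)
    (hrec : ∀ Q P : Finset (Finset (Fin n)),
      IsPartition n Q → IsPartition n P → Refines n Q P → Q ≠ P →
      ∑ R ∈ univ.filter
          (fun R : Finset (Finset (Fin n)) =>
            IsPartition n R ∧ Refines n Q R ∧ Refines n R P),
        mu R P = 0)
    (P : Finset (Finset (Fin n))) (hP : IsPartition n P)
    (hnonmod : 1 < (P.filter fun A => 1 < A.card).card) :
    ∑ Q ∈ univ.filter
        (fun Q : Finset (Finset (Fin n)) => IsPartition n Q ∧ Refines n Q P),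
      mu Q P * h Q = 0 :=
  moebius_of_separable_vanishes_off_modular_general n v hv h hsep mu hrec P hP hnonmod
end
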